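/- Let f : I → ℝ³ be a unit speed timelike curve on S²₁ with 0 ∈ I, let a > 0 and ξ ∈ (−π/2, π/2) be constants, and define γ̃(v) = a∫₀^v f(t)dt + a·tan ξ·∫₀^v f(t) ×ₗ f'(t) dt. Then for all v ∈ I: ⟪γ̃'(v), γ̃'(v)⟫ = a²/cos²ξ > 0 (so γ̃ is a regular spacelike curve); γ̃''(v) = a(1 + tan ξ·κ_g(v))·t(v); and where 1 + tan ξ·κ_g(v) > 0, the curvature and torsion of γ̃ are κ(v) = cos²ξ·(1 + tan ξ·κ_g(v))/a and τ(v) = cos²ξ·(κ_g(v) − tan ξ)/a. -/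

import Mathlib

noncomputable section

/-- Minkowski inner product ⟪x,y⟫ = x₁y₁ + x₂y₂ − x₃y₃ on ℝ³. -/
def mdot (x y : Fin 3 → ℝ) : ℝ := x 0 * y 0 + x 1 * y 1 - x 2 * y 2

/-- Lorentzian cross product x ×ₗ y. -/
def lcross (x y : Fin 3 → ℝ) : Fin 3 → ℝ :=
  ![x 1 * y 2 - x 2 * y 1, x 2 * y 0 - x 0 * y 2, x 1 * y 0 - x 0 * y 1]

/-- Determinant of the 3×3 matrix with rows x, y, z. -/
def det3 (x y z : Fin 3 → ℝ) : ℝ :=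
  x 0 * (y 1 * z 2 - y 2 * z 1) - x 1 * (y 0 * z 2 - y 2 * z 0) + x 2 * (y 0 * z 1 - y 1 * z 0)

/-- Minkowski norm ‖x‖ = √|⟪x,x⟫|. -/
def mnorm (x : Fin 3 → ℝ) : ℝ := Real.sqrt |mdot x x|

lemma st_mdot_comm (x y : Fin 3 → ℝ) : mdot x y = mdot y x := by unfold mdot; ring

lemma st_lcross_self (x : Fin 3 → ℝ) : lcross x x = 0 := by
  funext i; fin_cases i <;> (simp [lcross]; try ring)

lemma st_lcross_anti (x y : Fin 3 → ℝ) : lcross x y = - lcross y x := by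
  funext i; fin_cases i <;> (simp [lcross]; try ring)

lemma st_mdot_lcross (z x y : Fin 3 → ℝ) : mdot z (lcross x y) = det3 z x y := by
  simp [mdot, lcross, det3]; ring

lemma st_mdot_lcross_left (x y : Fin 3 → ℝ) : mdot x (lcross x y) = 0 := by
  simp [mdot, lcross]; ring

lemma st_mdot_lcross_right (x y : Fin 3 → ℝ) : mdot y (lcross x y) = 0 := by
  simp [mdot, lcross]; ring

lemma st_lagrange (x y : Fin 3 → ℝ) :
    mdot (lcross x y) (lcross x y) = mdot x y ^ 2 - mdot x x * mdot y y := by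
  simp [mdot, lcross]; ring

lemma st_triple (x y z : Fin 3 → ℝ) :
    lcross x (lcross y z) = mdot x y • z - mdot x z • y := by
  funext i; fin_cases i <;> (simp [lcross, mdot]; try ring)

lemma st_cramer (x y z w : Fin 3 → ℝ) :
    det3 x y z • w = det3 w y z • x + det3 x w z • y + det3 x y w • z := by
  funext i; fin_cases i <;> (simp [det3]; try ring)

lemma st_det3_cyclic (x y z : Fin 3 → ℝ) : det3 x y z = det3 z x y := by unfold det3; ring

lemma st_det3_swap (x y z : Fin 3 → ℝ) : det3 x y z = - det3 y x z := by unfold det3; ring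

lemma st_lcross_add_right (x y z : Fin 3 → ℝ) : lcross x (y + z) = lcross x y + lcross x z := by
  funext i; fin_cases i <;> (simp [lcross]; try ring)

lemma st_lcross_smul_right (c : ℝ) (x y : Fin 3 → ℝ) : lcross x (c • y) = c • lcross x y := by
  funext i; fin_cases i <;> (simp [lcross]; try ring)

lemma st_mdot_comb (c d : ℝ) (x y : Fin 3 → ℝ) :
    mdot (c • x + d • y) (c • x + d • y)
      = c^2 * mdot x x + 2*c*d * mdot x y + d^2 * mdot y y := by
  simp [mdot]; ring

lemma st_mdot_comb1 (d : ℝ) (x y : Fin 3 → ℝ) :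
    mdot (x + d • y) (x + d • y) = mdot x x + 2*d * mdot x y + d^2 * mdot y y := by
  simp [mdot]; ring

lemma st_lcross_comb (c d e : ℝ) (x y z : Fin 3 → ℝ) :
    lcross (c • x + d • y) (e • z) = (c*e) • lcross x z + (d*e) • lcross y z := by
  funext i; fin_cases i <;> (simp [lcross]; try ring)

lemma st_det3_comb (a₁ a₂ a₃ a₄ a₅ a₆ : ℝ) (x y z : Fin 3 → ℝ) :
    det3 (a₁ • x + a₂ • z) (a₃ • y) (a₄ • x + a₅ • y + a₆ • z)
      = a₃ * (a₁ * a₆ - a₂ * a₄) * det3 x y z := by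
  simp [det3]; ring

lemma st_hasDerivAt_mdot {x y : ℝ → Fin 3 → ℝ} {x' y' : Fin 3 → ℝ} {v : ℝ}
    (hx : HasDerivAt x x' v) (hy : HasDerivAt y y' v) :
    HasDerivAt (fun w => mdot (x w) (y w)) (mdot x' (y v) + mdot (x v) y') v := by
  have hx' := hasDerivAt_pi.mp hx
  have hy' := hasDerivAt_pi.mp hy
  have h := (((hx' 0).mul (hy' 0)).add ((hx' 1).mul (hy' 1))).sub ((hx' 2).mul (hy' 2))
  convert h using 1 <;> (try funext w) <;> (try simp [mdot]) <;> (try ring) <;> rfl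

lemma st_hasDerivAt_lcross {x y : ℝ → Fin 3 → ℝ} {x' y' : Fin 3 → ℝ} {v : ℝ}
    (hx : HasDerivAt x x' v) (hy : HasDerivAt y y' v) :
    HasDerivAt (fun w => lcross (x w) (y w)) (lcross x' (y v) + lcross (x v) y') v := by
  have hx' := hasDerivAt_pi.mp hx
  have hy' := hasDerivAt_pi.mp hy
  refine hasDerivAt_pi.mpr fun i => ?_
  fin_cases i
  · have h := (((hx' 1).mul (hy' 2)).sub ((hx' 2).mul (hy' 1)))
    convert h using 1 <;> (try funext w) <;> (try simp [lcross]) <;> try ring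
  · have h := (((hx' 2).mul (hy' 0)).sub ((hx' 0).mul (hy' 2)))
    convert h using 1 <;> (try funext w) <;> (try simp [lcross]) <;> try ring
  · have h := (((hx' 1).mul (hy' 0)).sub ((hx' 0).mul (hy' 1)))
    convert h using 1 <;> (try funext w) <;> (try simp [lcross]) <;> try ring

/-- For γ̃(v) = a∫₀^v f + a·tanξ·∫₀^v f ×ₗ f', where f is a unit speed timelike curve on
S²₁: γ̃ is a regular spacelike curve with ⟪γ̃',γ̃'⟫ = a²/cos²ξ > 0,
γ̃'' = a(1 + tanξ·κ_g)·t, and where 1 + tanξ·κ_g > 0 its curvature and torsion are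
κ = cos²ξ(1 + tanξ·κ_g)/a and τ = cos²ξ(κ_g − tanξ)/a. -/
theorem stmt_10 (a b : ℝ) (f : ℝ → Fin 3 → ℝ)
    (hf : ContDiffOn ℝ (⊤ : ℕ∞) f (Set.Ioo a b))
    (hsph : ∀ v ∈ Set.Ioo a b, mdot (f v) (f v) = 1)
    (htl : ∀ v ∈ Set.Ioo a b, mdot (deriv f v) (deriv f v) = -1)
    (h0 : (0 : ℝ) ∈ Set.Ioo a b)
    (t : ℝ → Fin 3 → ℝ) (kg : ℝ → ℝ)
    (ht : t = fun w => deriv f w)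
    (hkg : kg = fun w => det3 (f w) (t w) (deriv t w))
    (A ξ : ℝ) (hA : 0 < A) (hξ : ξ ∈ Set.Ioo (-(Real.pi / 2)) (Real.pi / 2))
    (γ : ℝ → Fin 3 → ℝ)
    (hγ : ∀ v ∈ Set.Ioo a b,
      γ v = A • (∫ w in (0:ℝ)..v, f w)
          + (A * Real.tan ξ) • (∫ w in (0:ℝ)..v, lcross (f w) (deriv f w)))
    (K T : ℝ → ℝ)
    (hK : K = fun v => mnorm (lcross (deriv γ v) (deriv (deriv γ) v))
        / Real.sqrt (mdot (deriv γ v) (deriv γ v)) ^ 3)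
    (hT : T = fun v => det3 (deriv γ v) (deriv (deriv γ) v) (deriv (deriv (deriv γ)) v)
        / mnorm (lcross (deriv γ v) (deriv (deriv γ) v)) ^ 2) :
    ∀ v ∈ Set.Ioo a b,
      mdot (deriv γ v) (deriv γ v) = A ^ 2 / Real.cos ξ ^ 2 ∧
      0 < A ^ 2 / Real.cos ξ ^ 2 ∧
      deriv (deriv γ) v = (A * (1 + Real.tan ξ * kg v)) • t v ∧
      (0 < 1 + Real.tan ξ * kg v →
        K v = Real.cos ξ ^ 2 * (1 + Real.tan ξ * kg v) / A ∧
        T v = Real.cos ξ ^ 2 * (kg v - Real.tan ξ) / A) := by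
  have hs : IsOpen (Set.Ioo a b) := isOpen_Ioo
  have hinf1 : ((⊤ : ℕ∞) : WithTop ℕ∞) + 1 ≤ ((⊤ : ℕ∞) : WithTop ℕ∞) := by
    exact le_of_eq (by rfl)
  have hf0 : ContDiffOn ℝ (⊤ : ℕ∞) f (Set.Ioo a b) := hf.of_le (by simp)
  have hf1 : ContDiffOn ℝ (⊤ : ℕ∞) (deriv f) (Set.Ioo a b) := hf0.deriv_of_isOpen hs hinf1
  have hf2 : ContDiffOn ℝ (⊤ : ℕ∞) (deriv (deriv f)) (Set.Ioo a b) :=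
    hf1.deriv_of_isOpen hs hinf1
  have hD : ∀ (g : ℝ → Fin 3 → ℝ), ContDiffOn ℝ (⊤ : ℕ∞) g (Set.Ioo a b) →
      ∀ w ∈ Set.Ioo a b, HasDerivAt g (deriv g w) w := fun g hg w hw =>
    ((hg.differentiableOn (by simp)).differentiableAt
      (hs.mem_nhds hw)).hasDerivAt
  -- continuity
  have hcf : ContinuousOn f (Set.Ioo a b) := hf0.continuousOn
  have hcf1 : ContinuousOn (deriv f) (Set.Ioo a b) := hf1.continuousOn
  have hcg : ContinuousOn (fun w => lcross (f w) (deriv f w)) (Set.Ioo a b) := by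
    apply continuousOn_pi.mpr
    intro i
    fin_cases i
    · show ContinuousOn (fun w => f w 1 * deriv f w 2 - f w 2 * deriv f w 1) (Set.Ioo a b)
      fun_prop
    · show ContinuousOn (fun w => f w 2 * deriv f w 0 - f w 0 * deriv f w 2) (Set.Ioo a b)
      fun_prop
    · show ContinuousOn (fun w => f w 1 * deriv f w 0 - f w 0 * deriv f w 1) (Set.Ioo a b)
      fun_prop
  -- first derivative of γ
  have key1 : ∀ w ∈ Set.Ioo a b, HasDerivAt γ
      (A • f w + (A * Real.tan ξ) • lcross (f w) (deriv f w)) w := by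
    intro w hw
    have hsub : Set.uIcc (0:ℝ) w ⊆ Set.Ioo a b :=
      (Set.ordConnected_Ioo).uIcc_subset h0 hw
    have h1 : HasDerivAt (fun u => ∫ s in (0:ℝ)..u, f s) (f w) w :=
      intervalIntegral.integral_hasDerivAt_right
        ((hcf.mono hsub).intervalIntegrable)
        (hcf.stronglyMeasurableAtFilter hs w hw)
        (hcf.continuousAt (hs.mem_nhds hw))
    have h2 : HasDerivAt (fun u => ∫ s in (0:ℝ)..u, lcross (f s) (deriv f s))
        (lcross (f w) (deriv f w)) w :=
      intervalIntegral.integral_hasDerivAt_right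
        ((hcg.mono hsub).intervalIntegrable)
        (hcg.stronglyMeasurableAtFilter hs w hw)
        (hcg.continuousAt (hs.mem_nhds hw))
    have h3 := (h1.const_smul A).add (h2.const_smul (A * Real.tan ξ))
    exact h3.congr_of_eventuallyEq
      (Filter.eventuallyEq_of_mem (hs.mem_nhds hw) fun u hu => hγ u hu)
  have hγ1 : ∀ w ∈ Set.Ioo a b,
      deriv γ w = A • f w + (A * Real.tan ξ) • lcross (f w) (deriv f w) :=
    fun w hw => (key1 w hw).deriv
  -- second derivative of γ
  have key2 : ∀ w ∈ Set.Ioo a b, HasDerivAt (deriv γ)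
      (A • deriv f w + (A * Real.tan ξ) • lcross (f w) (deriv (deriv f) w)) w := by
    intro w hw
    have hlc := st_hasDerivAt_lcross (hD f hf0 w hw) (hD (deriv f) hf1 w hw)
    rw [st_lcross_self, zero_add] at hlc
    have h3 := ((hD f hf0 w hw).const_smul A).add (hlc.const_smul (A * Real.tan ξ))
    exact h3.congr_of_eventuallyEq
      (Filter.eventuallyEq_of_mem (hs.mem_nhds hw) fun u hu => hγ1 u hu)
  have hγ2 : ∀ w ∈ Set.Ioo a b, deriv (deriv γ) w
      = A • deriv f w + (A * Real.tan ξ) • lcross (f w) (deriv (deriv f) w) :=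
    fun w hw => (key2 w hw).deriv
  -- third derivative of γ
  have key3 : ∀ w ∈ Set.Ioo a b, HasDerivAt (deriv (deriv γ))
      (A • deriv (deriv f) w + (A * Real.tan ξ) •
        (lcross (deriv f w) (deriv (deriv f) w)
          + lcross (f w) (deriv (deriv (deriv f)) w))) w := by
    intro w hw
    have hlc := st_hasDerivAt_lcross (hD f hf0 w hw) (hD (deriv (deriv f)) hf2 w hw)
    have h3 := ((hD (deriv f) hf1 w hw).const_smul A).add (hlc.const_smul (A * Real.tan ξ))
    exact h3.congr_of_eventuallyEq
      (Filter.eventuallyEq_of_mem (hs.mem_nhds hw) fun u hu => hγ2 u hu)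
  have hγ3 : ∀ w ∈ Set.Ioo a b, deriv (deriv (deriv γ)) w
      = A • deriv (deriv f) w + (A * Real.tan ξ) •
        (lcross (deriv f w) (deriv (deriv f) w)
          + lcross (f w) (deriv (deriv (deriv f)) w)) :=
    fun w hw => (key3 w hw).deriv
  -- scalar constraints
  have derivzero : ∀ (φ : ℝ → ℝ) (c : ℝ), (∀ w ∈ Set.Ioo a b, φ w = c) →
      ∀ w ∈ Set.Ioo a b, ∀ {d : ℝ}, HasDerivAt φ d w → d = 0 := by
    intro φ c hconst w hw d hd
    have heq : φ =ᶠ[nhds w] fun _ => c :=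
      Filter.eventuallyEq_of_mem (hs.mem_nhds hw) fun u hu => hconst u hu
    have h1 := hd.deriv
    rw [Filter.EventuallyEq.deriv_eq heq, deriv_const] at h1
    exact h1.symm
  have c3 : ∀ w ∈ Set.Ioo a b, mdot (f w) (deriv f w) = 0 := by
    intro w hw
    have hd := st_hasDerivAt_mdot (hD f hf0 w hw) (hD f hf0 w hw)
    have h1 := derivzero _ 1 hsph w hw hd
    have h2 := st_mdot_comm (deriv f w) (f w)
    linarith
  have c4 : ∀ w ∈ Set.Ioo a b, mdot (deriv f w) (deriv (deriv f) w) = 0 := by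
    intro w hw
    have hd := st_hasDerivAt_mdot (hD (deriv f) hf1 w hw) (hD (deriv f) hf1 w hw)
    have h1 := derivzero _ (-1) htl w hw hd
    have h2 := st_mdot_comm (deriv (deriv f) w) (deriv f w)
    linarith
  have c5 : ∀ w ∈ Set.Ioo a b, mdot (f w) (deriv (deriv f) w) = 1 := by
    intro w hw
    have hd := st_hasDerivAt_mdot (hD f hf0 w hw) (hD (deriv f) hf1 w hw)
    have h1 := derivzero _ 0 c3 w hw hd
    have h2 := st_mdot_comm (deriv f w) (deriv f w)
    have h3 := htl w hw
    linarith
  have c6 : ∀ w ∈ Set.Ioo a b, mdot (f w) (deriv (deriv (deriv f)) w) = 0 := by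
    intro w hw
    have hd := st_hasDerivAt_mdot (hD f hf0 w hw) (hD (deriv (deriv f)) hf2 w hw)
    have h1 := derivzero _ 1 c5 w hw hd
    have h2 := st_mdot_comm (deriv f w) (deriv (deriv f) w)
    have h3 := c4 w hw
    linarith
  have c7 : ∀ w ∈ Set.Ioo a b, mdot (deriv f w) (deriv (deriv (deriv f)) w)
      = - mdot (deriv (deriv f) w) (deriv (deriv f) w) := by
    intro w hw
    have hd := st_hasDerivAt_mdot (hD (deriv f) hf1 w hw) (hD (deriv (deriv f)) hf2 w hw)
    have h1 := derivzero _ 0 c4 w hw hd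
    have h2 := st_mdot_comm (deriv (deriv f) w) (deriv f w)
    linarith
  
  intro v hv
  have hcos : 0 < Real.cos ξ := Real.cos_pos_of_mem_Ioo hξ
  have hcne : Real.cos ξ ≠ 0 := ne_of_gt hcos
  have h1u : 1 + Real.tan ξ ^ 2 = 1 / Real.cos ξ ^ 2 := by
    rw [Real.tan_eq_sin_div_cos]
    have hsc := Real.sin_sq_add_cos_sq ξ
    field_simp
    linarith
  have e1 : mdot (f v) (f v) = 1 := hsph v hv
  have e2 : mdot (deriv f v) (deriv f v) = -1 := htl v hv
  have e3 : mdot (f v) (deriv f v) = 0 := c3 v hv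
  have e3' : mdot (deriv f v) (f v) = 0 := by rw [st_mdot_comm]; exact e3
  have e4 : mdot (deriv f v) (deriv (deriv f) v) = 0 := c4 v hv
  have e4' : mdot (deriv (deriv f) v) (deriv f v) = 0 := by rw [st_mdot_comm]; exact e4
  have e5 : mdot (f v) (deriv (deriv f) v) = 1 := c5 v hv
  have e5' : mdot (deriv (deriv f) v) (f v) = 1 := by rw [st_mdot_comm]; exact e5
  have e6 : mdot (f v) (deriv (deriv (deriv f)) v) = 0 := c6 v hv
  have e7 : mdot (deriv f v) (deriv (deriv (deriv f)) v)
      = - mdot (deriv (deriv f) v) (deriv (deriv f) v) := c7 v hv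
  have hkgv : kg v = det3 (f v) (deriv f v) (deriv (deriv f) v) := by rw [hkg, ht]
  -- frame facts, S := lcross (f v) (deriv f v)
  have sSS : mdot (lcross (f v) (deriv f v)) (lcross (f v) (deriv f v)) = 1 := by
    rw [st_lagrange, e1, e2, e3]; norm_num
  have sFS : mdot (f v) (lcross (f v) (deriv f v)) = 0 := st_mdot_lcross_left _ _
  have sSF : mdot (lcross (f v) (deriv f v)) (f v) = 0 := by rw [st_mdot_comm]; exact sFS
  have cFS : lcross (f v) (lcross (f v) (deriv f v)) = deriv f v := by
    rw [st_triple, e1, e3]; simp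
  have cTS : lcross (deriv f v) (lcross (f v) (deriv f v)) = f v := by
    rw [st_triple, e3', e2]; simp
  have cST : lcross (lcross (f v) (deriv f v)) (deriv f v) = - f v := by
    rw [st_lcross_anti, cTS]
  have cTF : lcross (deriv f v) (f v) = - lcross (f v) (deriv f v) := st_lcross_anti _ _
  -- determinant values
  have dFTS : det3 (f v) (deriv f v) (lcross (f v) (deriv f v)) = 1 := by
    rw [← st_mdot_lcross, cTS]; exact e1
  have dPTS : det3 (deriv (deriv f) v) (deriv f v) (lcross (f v) (deriv f v)) = 1 := by
    rw [← st_mdot_lcross, cTS]; exact e5'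
  have dFPS : det3 (f v) (deriv (deriv f) v) (lcross (f v) (deriv f v)) = 0 := by
    rw [st_det3_swap, ← st_mdot_lcross, cFS, e4']; norm_num
  have dFTP : det3 (f v) (deriv f v) (deriv (deriv f) v) = kg v := hkgv.symm
  -- P decomposition
  have hP : deriv (deriv f) v = f v + kg v • lcross (f v) (deriv f v) := by
    have h := st_cramer (f v) (deriv f v) (lcross (f v) (deriv f v)) (deriv (deriv f) v)
    rw [dFTS, dPTS, dFPS, dFTP] at h
    simpa using h
  have hPP : mdot (deriv (deriv f) v) (deriv (deriv f) v) = 1 + kg v ^ 2 := by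
    rw [hP, st_mdot_comb1, e1, sFS, sSS]; ring
  -- Q decomposition
  have dQTS : det3 (deriv (deriv (deriv f)) v) (deriv f v) (lcross (f v) (deriv f v)) = 0 := by
    rw [← st_mdot_lcross, cTS, st_mdot_comm]; exact e6
  have dFQS : det3 (f v) (deriv (deriv (deriv f)) v) (lcross (f v) (deriv f v))
      = 1 + kg v ^ 2 := by
    rw [st_det3_swap, ← st_mdot_lcross, cFS, st_mdot_comm, e7, hPP]; ring
  have dFTQ : det3 (f v) (deriv f v) (deriv (deriv (deriv f)) v)
      = mdot (deriv (deriv (deriv f)) v) (lcross (f v) (deriv f v)) := by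
    rw [st_det3_cyclic, ← st_mdot_lcross]
  obtain ⟨δ, hQ⟩ : ∃ δ : ℝ, deriv (deriv (deriv f)) v
      = (1 + kg v ^ 2) • deriv f v + δ • lcross (f v) (deriv f v) := by
    refine ⟨mdot (deriv (deriv (deriv f)) v) (lcross (f v) (deriv f v)), ?_⟩
    have h := st_cramer (f v) (deriv f v) (lcross (f v) (deriv f v))
      (deriv (deriv (deriv f)) v)
    rw [dFTS, dQTS, dFQS, dFTQ] at h
    simpa using h
  -- derivatives at v in frame form
  have g1 : deriv γ v = A • f v + (A * Real.tan ξ) • lcross (f v) (deriv f v) := hγ1 v hv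
  have g2 : deriv (deriv γ) v = (A * (1 + Real.tan ξ * kg v)) • deriv f v := by
    rw [hγ2 v hv, hP, st_lcross_add_right, st_lcross_self, st_lcross_smul_right, cFS, zero_add]
    module
  have g3 : deriv (deriv (deriv γ)) v
      = (A * (1 + Real.tan ξ * kg v)) • f v
        + (A * Real.tan ξ * δ) • deriv f v
        + (A * kg v * (1 + Real.tan ξ * kg v)) • lcross (f v) (deriv f v) := by
    rw [hγ3 v hv, hP, hQ, st_lcross_add_right, st_lcross_smul_right, cTF, cTS,
      st_lcross_add_right, st_lcross_smul_right, st_lcross_smul_right, cFS]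
    module
  -- goal 1
  have G1 : mdot (deriv γ v) (deriv γ v) = A ^ 2 / Real.cos ξ ^ 2 := by
    rw [g1, st_mdot_comb, e1, sFS, sSS]
    linear_combination A ^ 2 * h1u
  refine ⟨G1, div_pos (pow_pos hA 2) (pow_pos hcos 2), ?_, ?_⟩
  · rw [g2, ht]
  intro hpos
  have hL : lcross (deriv γ v) (deriv (deriv γ) v)
      = (A * (A * (1 + Real.tan ξ * kg v))) • lcross (f v) (deriv f v)
        + (-(A * Real.tan ξ * (A * (1 + Real.tan ξ * kg v)))) • f v := by
    rw [g1, g2, st_lcross_comb, cST]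
    module
  have hLL : mdot (lcross (deriv γ v) (deriv (deriv γ) v))
      (lcross (deriv γ v) (deriv (deriv γ) v))
      = (A ^ 2 * (1 + Real.tan ξ * kg v) / Real.cos ξ) ^ 2 := by
    rw [hL, st_mdot_comb, sSS, sSF, e1]
    linear_combination (A ^ 2 * (1 + Real.tan ξ * kg v)) ^ 2 * h1u
  have hqnn : 0 ≤ A ^ 2 * (1 + Real.tan ξ * kg v) / Real.cos ξ :=
    div_nonneg (mul_nonneg (sq_nonneg A) hpos.le) hcos.le
  have hml : mnorm (lcross (deriv γ v) (deriv (deriv γ) v))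
      = A ^ 2 * (1 + Real.tan ξ * kg v) / Real.cos ξ := by
    rw [mnorm, hLL, abs_of_nonneg (sq_nonneg _), Real.sqrt_sq hqnn]
  have hsq : Real.sqrt (mdot (deriv γ v) (deriv γ v)) = A / Real.cos ξ := by
    rw [G1, show A ^ 2 / Real.cos ξ ^ 2 = (A / Real.cos ξ) ^ 2 by ring,
      Real.sqrt_sq (div_nonneg hA.le hcos.le)]
  constructor
  · rw [hK]
    simp only []
    rw [hml, hsq]
    field_simp
    try ring
  · have hdet : det3 (deriv γ v) (deriv (deriv γ) v) (deriv (deriv (deriv γ)) v)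
        = A ^ 3 * (1 + Real.tan ξ * kg v) ^ 2 * (kg v - Real.tan ξ) := by
      rw [g1, g2, g3, st_det3_comb, dFTS]
      ring
    rw [hT]
    simp only []
    rw [hdet, hml]
    have hne : 1 + Real.tan ξ * kg v ≠ 0 := ne_of_gt hpos
    have hAne : A ≠ 0 := ne_of_gt hA
    field_simp
    try ring
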